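/- arXiv:2405.16643 — 2 statements merged into one kernel-verified Lean document; each statement's English description precedes it below -/
import Mathlib

section
/- Suppose Assumptions 1-4 hold and V : ℝ₊₊ → ℝ is concave. Then V is a viscosity solution to the HJB equation if and only if for every k > 0 and every p ∈ ∂V(k), sup_{c≥0}{F(k,c)·p + u(c,k)} = ρ·V(k). -/
open MeasureTheory Real Set Filter Topology
open scoped ENNReal NNReal

noncomputable section

/- ## Basic analytic notions -/

/-- The positive part of an extended real number, as an element of `ℝ≥0∞`. -/
def eposPart (x : EReal) : ℝ≥0∞ := if x = ⊤ then ⊤ else ENNReal.ofReal x.toReal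

/-- `f` is absolutely continuous on `[a, b]`. -/
def AbsContOn (f : ℝ → ℝ) (a b : ℝ) : Prop :=
  ∀ ε > (0:ℝ), ∃ δ > (0:ℝ), ∀ n : ℕ, ∀ s t : Fin n → ℝ,
    (∀ i, a ≤ s i ∧ s i ≤ t i ∧ t i ≤ b) →
    (Pairwise fun i j => Disjoint (Set.Ioo (s i) (t i)) (Set.Ioo (s j) (t j))) →
    (∑ i, (t i - s i)) < δ → (∑ i, |f (t i) - f (s i)|) < ε

/-- `f` is absolutely continuous on every compact subinterval of `ℝ₊`. -/
def LocAbsCont (f : ℝ → ℝ) : Prop := ∀ a b : ℝ, 0 ≤ a → a < b → AbsContOn f a b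

/-- The set `W₁` of nonnegative locally integrable control paths. -/
def W1 : Set (ℝ → ℝ) := {c | (∀ t, 0 ≤ c t) ∧ ∀ T > (0:ℝ), IntegrableOn c (Set.Icc 0 T)}

/-- The set `W₂` of nonnegative measurable locally bounded control paths. -/
def W2 : Set (ℝ → ℝ) :=
  {c | (∀ t, 0 ≤ c t) ∧ Measurable c ∧ ∀ T > (0:ℝ), ∃ M : ℝ, ∀ t ∈ Set.Icc (0:ℝ) T, c t ≤ M}

/-- Assumption 1: positive discount rate, and `W` is `W₁` or `W₂`. -/
def Assumption1 (ρ : ℝ) (W : Set (ℝ → ℝ)) : Prop := 0 < ρ ∧ (W = W1 ∨ W = W2)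

def posOrth : Set (ℝ × ℝ) := {p | 0 ≤ p.1 ∧ 0 ≤ p.2}
def posOrthOpen : Set (ℝ × ℝ) := {p | 0 < p.1 ∧ 0 < p.2}

/-- The realized (real-valued) utility. -/
def ur (u : ℝ → ℝ → EReal) (c k : ℝ) : ℝ := (u c k).toReal
/-- The partial derivative `∂u/∂c`. -/
def ucDeriv (u : ℝ → ℝ → EReal) (c k : ℝ) : ℝ := deriv (fun c' => ur u c' k) c
/-- The partial derivative `∂u/∂k`. -/
def ukDeriv (u : ℝ → ℝ → EReal) (c k : ℝ) : ℝ := deriv (fun k' => ur u c k') k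

/-- Assumption 2 on the instantaneous utility function `u : ℝ₊² → ℝ ∪ {-∞}`. -/
structure Assumption2 (u : ℝ → ℝ → EReal) : Prop where
  ne_top : ∀ c k : ℝ, u c k ≠ ⊤
  cont : ContinuousOn (fun p : ℝ × ℝ => u p.1 p.2) posOrth
  concave : ∀ c₁ k₁ c₂ k₂ t : ℝ, 0 ≤ c₁ → 0 ≤ k₁ → 0 ≤ c₂ → 0 ≤ k₂ → 0 ≤ t → t ≤ 1 →
    ((1 - t : ℝ) : EReal) * u c₁ k₁ + (t : EReal) * u c₂ k₂ ≤
      u ((1 - t) * c₁ + t * c₂) ((1 - t) * k₁ + t * k₂)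
  mono : ∀ c₁ k₁ c₂ k₂ : ℝ, 0 ≤ c₁ → 0 ≤ k₁ → c₁ ≤ c₂ → k₁ ≤ k₂ → u c₁ k₁ ≤ u c₂ k₂
  strictMono_c : ∀ k c₁ c₂ : ℝ, 0 < k → 0 < c₁ → c₁ < c₂ → u c₁ k < u c₂ k
  ne_bot_pos : ∀ c k : ℝ, 0 < c → 0 < k → u c k ≠ ⊥
  smooth : ContDiffOn ℝ 1 (fun p : ℝ × ℝ => ur u p.1 p.2) posOrthOpen
  ne_bot_zero : ∃ c > (0:ℝ), u c 0 ≠ ⊥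

/-- Assumption 3 on the technology function `F : ℝ₊² → ℝ` (with `F k c`). -/
structure Assumption3 (W : Set (ℝ → ℝ)) (F : ℝ → ℝ → ℝ) : Prop where
  cont : ContinuousOn (fun p : ℝ × ℝ => F p.1 p.2) posOrth
  concave : ConcaveOn ℝ posOrth (fun p : ℝ × ℝ => F p.1 p.2)
  zero : F 0 0 = 0
  anti_c : ∀ k c₁ c₂ : ℝ, 0 ≤ k → 0 ≤ c₁ → c₁ < c₂ → F k c₂ < F k c₁
  lower : ∃ d₁ > (0:ℝ), ∃ δ₂ : ℝ → ℝ, (∀ c : ℝ, 0 ≤ c → 0 ≤ δ₂ c) ∧ δ₂ 0 = 0 ∧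
    (∀ c₁ c₂ : ℝ, 0 ≤ c₁ → c₁ < c₂ → δ₂ c₁ < δ₂ c₂) ∧
    (∀ k c : ℝ, 0 < k → 0 ≤ c → -d₁ * k - δ₂ c < F k c) ∧
    (W = W1 → ∃ d₂ : ℝ, 0 ≤ d₂ ∧ ∀ c : ℝ, 0 ≤ c → δ₂ c = d₂ * c)
  productive : ∀ c : ℝ, 0 ≤ c → ∃ k > (0:ℝ), F 0 c < F k c

/-- Assumption 4 on the marginal utility of consumption. -/
structure Assumption4 (u : ℝ → ℝ → EReal) : Prop where
  anti : ∀ k c₁ c₂ : ℝ, 0 < k → 0 < c₁ → c₁ < c₂ → ucDeriv u c₂ k < ucDeriv u c₁ k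
  tendsto_zero : ∀ k > (0:ℝ), Tendsto (fun c => ucDeriv u c k) (𝓝[>] (0:ℝ)) atTop
  tendsto_top : ∀ k > (0:ℝ), Tendsto (fun c => ucDeriv u c k) atTop (𝓝 0)
  k_bounded : ∀ k > (0:ℝ), ∃ M : ℝ, ∀ᶠ c in 𝓝[>] (0:ℝ), ukDeriv u c k ≤ M

/-- The CRRA (constant relative risk aversion) function. -/
def crra (θ x : ℝ) : ℝ := if θ = 1 then Real.log x else (x ^ (1 - θ) - 1) / (1 - θ)

/-- The CRRA function extended to `x = 0` with value `-∞` when `θ ≥ 1`. -/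
def crraE (θ x : ℝ) : EReal :=
  if 0 < x then ((crra θ x : ℝ) : EReal)
  else if θ < 1 then ((-1 / (1 - θ) : ℝ) : EReal) else ⊥

/-- Assumption 5 with explicit parameters. -/
structure Assumption5Data (ρ : ℝ) (u : ℝ → ℝ → EReal) (F : ℝ → ℝ → ℝ)
    (kstar cstar γ δ θ a b C : ℝ) : Prop where
  kstar_pos : 0 < kstar
  cstar_nonneg : 0 ≤ cstar
  gamma_pos : 0 < γ
  delta_pos : 0 < δ
  theta_pos : 0 < θ
  a_pos : 0 < a
  b_nonneg : 0 ≤ b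
  subdiff : ∀ k c : ℝ, 0 ≤ k → 0 ≤ c →
    F k c - F kstar cstar ≤ γ * (k - kstar) - δ * (c - cstar)
  rate : 0 < ρ - (1 - θ) * γ
  bound : ∀ c k : ℝ, 0 < c → 0 < k →
    u c k ≤ ((a * crra θ c + b * crra θ k + C : ℝ) : EReal)

/-- Assumption 5. -/
def Assumption5 (ρ : ℝ) (u : ℝ → ℝ → EReal) (F : ℝ → ℝ → ℝ) : Prop :=
  ∃ kstar cstar γ δ θ a b C : ℝ, Assumption5Data ρ u F kstar cstar γ δ θ a b C

/-- The partial derivative `∂F/∂c`. -/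
def FcDeriv (F : ℝ → ℝ → ℝ) (k c : ℝ) : ℝ := deriv (fun c' => F k c') c
/-- The mixed partial derivative `∂²F/∂k∂c`. -/
def FckDeriv (F : ℝ → ℝ → ℝ) (k c : ℝ) : ℝ := deriv (fun k' => FcDeriv F k' c) k
/-- The right partial derivative `D_{k,+}F(k,c)` of the concave function `k ↦ F(k,c)`. -/
def rightDerivK (F : ℝ → ℝ → ℝ) (k c : ℝ) : ℝ :=
  sSup {r : ℝ | ∃ t > (0:ℝ), r = (F (k + t) c - F k c) / t}

/-- Assumption 6. -/
structure Assumption6 (ρ : ℝ) (u : ℝ → ℝ → EReal) (F : ℝ → ℝ → ℝ) : Prop where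
  smooth : ∃ ε₀ > (0:ℝ),
    (∀ c > (0:ℝ), ContDiffOn ℝ 1 (fun k => ucDeriv u c k) (Set.Ioo 0 ε₀)) ∧
    ∃ H : ℝ → ℝ → ℝ,
      ContDiffOn ℝ 1 (fun p : ℝ × ℝ => H p.1 p.2) (Set.Ioo 0 ε₀ ×ˢ Set.Ioi 0) ∧
      (∀ k c : ℝ, k ∈ Set.Ioo 0 ε₀ → 0 < c → 0 < deriv (fun k' => H k' c) k) ∧
      (∀ k c : ℝ, k ∈ Set.Ioo 0 ε₀ → 0 < c → deriv (fun c' => H k c') c < 0) ∧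
      (∀ k c : ℝ, k ∈ Set.Ioo 0 ε₀ → 0 < c → H k c ≠ 0 →
        ∃ ε > (0:ℝ),
          (∀ p ∈ Metric.ball ((k, c) : ℝ × ℝ) ε,
            HasDerivAt (fun c' => F p.1 c') (FcDeriv F p.1 p.2) p.2) ∧
          ContinuousOn (fun p : ℝ × ℝ => FcDeriv F p.1 p.2) (Metric.ball ((k, c) : ℝ × ℝ) ε) ∧
          (∀ p ∈ Metric.ball ((k, c) : ℝ × ℝ) ε,
            HasDerivAt (fun k' => FcDeriv F k' p.2) (FckDeriv F p.1 p.2) p.1) ∧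
          ContinuousOn (fun p : ℝ × ℝ => FckDeriv F p.1 p.2) (Metric.ball ((k, c) : ℝ × ℝ) ε))
  steep : ∃ k > (0:ℝ), ∃ r : ℝ, ρ < r ∧ ∀ c : ℝ, 0 ≤ c → r ≤ rightDerivK F k c

/- ## Payoffs and the value function -/

/-- The discounted utility flow `e^{-ρt} u(c(t), k(t))`, as an extended real. -/
def discounted (ρ : ℝ) (u : ℝ → ℝ → EReal) (k c : ℝ → ℝ) (t : ℝ) : EReal :=
  ((Real.exp (-ρ * t) : ℝ) : EReal) * u (c t) (k t)

def payoffPos (ρ : ℝ) (u : ℝ → ℝ → EReal) (k c : ℝ → ℝ) : ℝ≥0∞ :=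
  ∫⁻ t in Set.Ioi (0:ℝ), eposPart (discounted ρ u k c t)

def payoffNeg (ρ : ℝ) (u : ℝ → ℝ → EReal) (k c : ℝ → ℝ) : ℝ≥0∞ :=
  ∫⁻ t in Set.Ioi (0:ℝ), eposPart (-(discounted ρ u k c t))

/-- `∫₀^∞ e^{-ρt} u(c(t),k(t)) dt` can be defined (possibly `±∞`). -/
def PayoffDefined (ρ : ℝ) (u : ℝ → ℝ → EReal) (k c : ℝ → ℝ) : Prop :=
  payoffPos ρ u k c ≠ ⊤ ∨ payoffNeg ρ u k c ≠ ⊤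

/-- `∫₀^∞ e^{-ρt} u(c(t),k(t)) dt`, as an extended real. -/
def payoff (ρ : ℝ) (u : ℝ → ℝ → EReal) (k c : ℝ → ℝ) : EReal :=
  (payoffPos ρ u k c : EReal) - (payoffNeg ρ u k c : EReal)

/-- `∫₀^T e^{-ρt} u(c(t),k(t)) dt`, as an extended real. -/
def payoffUpTo (ρ : ℝ) (u : ℝ → ℝ → EReal) (k c : ℝ → ℝ) (T : ℝ) : EReal :=
  ((∫⁻ t in Set.Ioc (0:ℝ) T, eposPart (discounted ρ u k c t) : ℝ≥0∞) : EReal) -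
  ((∫⁻ t in Set.Ioc (0:ℝ) T, eposPart (-(discounted ρ u k c t)) : ℝ≥0∞) : EReal)

/-- The admissible pairs of problem (1) with initial capital `kbar`. -/
structure Admissible (ρ : ℝ) (W : Set (ℝ → ℝ)) (u : ℝ → ℝ → EReal) (F : ℝ → ℝ → ℝ)
    (kbar : ℝ) (k c : ℝ → ℝ) : Prop where
  locAC : LocAbsCont k
  mem_W : c ∈ W
  k_nonneg : ∀ t : ℝ, 0 ≤ t → 0 ≤ k t
  c_nonneg : ∀ t : ℝ, 0 ≤ t → 0 ≤ c t
  defined : PayoffDefined ρ u k c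
  init : k 0 = kbar
  ode : ∀ᵐ t : ℝ, 0 < t → HasDerivAt k (F (k t) (c t)) t

/-- The value function of problem (1). -/
def Vbar (ρ : ℝ) (W : Set (ℝ → ℝ)) (u : ℝ → ℝ → EReal) (F : ℝ → ℝ → ℝ) (kbar : ℝ) : EReal :=
  sSup {x : EReal | ∃ k c : ℝ → ℝ, Admissible ρ W u F kbar k c ∧ x = payoff ρ u k c}

/-- The value function, realized as a real-valued function. -/
def VbarR (ρ : ℝ) (W : Set (ℝ → ℝ)) (u : ℝ → ℝ → EReal) (F : ℝ → ℝ → ℝ) (kbar : ℝ) : ℝ :=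
  (Vbar ρ W u F kbar).toReal

/-- The value function is finite. -/
def VbarFinite (ρ : ℝ) (W : Set (ℝ → ℝ)) (u : ℝ → ℝ → EReal) (F : ℝ → ℝ → ℝ) : Prop :=
  ∀ k : ℝ, 0 < k → Vbar ρ W u F k ≠ ⊤ ∧ Vbar ρ W u F k ≠ ⊥

/- ## The HJB equation -/

/-- The Hamiltonian `sup_{c ≥ 0} {F(k,c)p + u(c,k)}`. -/
def Ham (u : ℝ → ℝ → EReal) (F : ℝ → ℝ → ℝ) (k p : ℝ) : EReal :=
  ⨆ c : {c : ℝ // 0 ≤ c}, (((F k c.1 * p : ℝ) : EReal) + u c.1 k)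

def IsViscositySubsolution (ρ : ℝ) (u : ℝ → ℝ → EReal) (F : ℝ → ℝ → ℝ) (V : ℝ → ℝ) : Prop :=
  UpperSemicontinuousOn V (Set.Ioi 0) ∧
  ∀ k : ℝ, 0 < k → ∀ φ : ℝ → ℝ, ∀ δ > (0:ℝ), Metric.ball k δ ⊆ Set.Ioi 0 →
    ContDiffOn ℝ 1 φ (Metric.ball k δ) → φ k = V k →
    (∀ x ∈ Metric.ball k δ, φ x ≤ V x) →
    Ham u F k (deriv φ k) ≤ ((ρ * V k : ℝ) : EReal)

def IsViscositySupersolution (ρ : ℝ) (u : ℝ → ℝ → EReal) (F : ℝ → ℝ → ℝ) (V : ℝ → ℝ) : Prop :=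
  LowerSemicontinuousOn V (Set.Ioi 0) ∧
  ∀ k : ℝ, 0 < k → ∀ φ : ℝ → ℝ, ∀ δ > (0:ℝ), Metric.ball k δ ⊆ Set.Ioi 0 →
    ContDiffOn ℝ 1 φ (Metric.ball k δ) → φ k = V k →
    (∀ x ∈ Metric.ball k δ, V x ≤ φ x) →
    ((ρ * V k : ℝ) : EReal) ≤ Ham u F k (deriv φ k)

def IsViscositySolution (ρ : ℝ) (u : ℝ → ℝ → EReal) (F : ℝ → ℝ → ℝ) (V : ℝ → ℝ) : Prop :=
  ContinuousOn V (Set.Ioi 0) ∧ IsViscositySubsolution ρ u F V ∧ IsViscositySupersolution ρ u F V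

/-- `V` is a classical (continuously differentiable) solution to the HJB equation on `ℝ₊₊`. -/
def IsClassicalSolution (ρ : ℝ) (u : ℝ → ℝ → EReal) (F : ℝ → ℝ → ℝ) (V : ℝ → ℝ) : Prop :=
  (∀ k : ℝ, 0 < k → DifferentiableAt ℝ V k) ∧ ContinuousOn (deriv V) (Set.Ioi 0) ∧
  ∀ k : ℝ, 0 < k → Ham u F k (deriv V k) = ((ρ * V k : ℝ) : EReal)

/- ## Subdifferentials -/

/-- The subdifferential (superdifferential) of a concave function `G` on the set `S`. -/
def subdiffOn (G : ℝ → ℝ) (S : Set ℝ) (x : ℝ) : Set ℝ :=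
  {p : ℝ | ∀ y ∈ S, G y - G x ≤ p * (y - x)}

/- ## ODEs and differential inclusions -/

/-- A positive solution of the autonomous ODE `k' = h(k)`, `k(0) = kbar`, on the interval `I`. -/
structure SolvesODEOn (h : ℝ → ℝ) (kbar : ℝ) (k : ℝ → ℝ) (I : Set ℝ) : Prop where
  locAC : ∀ a b : ℝ, a ∈ I → b ∈ I → a < b → AbsContOn k a b
  init : k 0 = kbar
  pos : ∀ t ∈ I, 0 < k t
  hasDeriv : ∀ᵐ t : ℝ, t ∈ I → HasDerivAt k (h (k t)) t

/-- A positive solution of the differential inclusion `k' ∈ Γ(k)`, `k(0) = kbar`, on `I`. -/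
structure SolvesInclOn (Γ : ℝ → Set ℝ) (kbar : ℝ) (k : ℝ → ℝ) (I : Set ℝ) : Prop where
  locAC : ∀ a b : ℝ, a ∈ I → b ∈ I → a < b → AbsContOn k a b
  init : k 0 = kbar
  pos : ∀ t ∈ I, 0 < k t
  hasDeriv : ∀ᵐ t : ℝ, t ∈ I → ∃ d ∈ Γ (k t), HasDerivAt k d t

/-- The pure accumulation path with initial value `kbar`. -/
def IsPurePath (F : ℝ → ℝ → ℝ) (kbar : ℝ) (k : ℝ → ℝ) : Prop :=
  SolvesODEOn (fun x => F x 0) kbar k (Set.Ici 0)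

/-- The growth condition (7). -/
def GrowthCondition (ρ : ℝ) (F : ℝ → ℝ → ℝ) (V : ℝ → ℝ) : Prop :=
  ∀ kbar : ℝ, 0 < kbar → ∀ kp : ℝ → ℝ, IsPurePath F kbar kp →
    Tendsto (fun T => Real.exp (-ρ * T) * V (kp T)) atTop (𝓝 0)

/-- Membership in the space `𝒱` of increasing concave functions satisfying the growth
condition. -/
def memV (ρ : ℝ) (F : ℝ → ℝ → ℝ) (V : ℝ → ℝ) : Prop :=
  StrictMonoOn V (Set.Ioi 0) ∧ ConcaveOn ℝ (Set.Ioi 0) V ∧ GrowthCondition ρ F V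

/- ## The maximizing consumption selection and the optimal differential inclusion -/

/-- `cs` is the positive continuous maximizer function `c*(p,k)` of Proposition 1. -/
def IsMaxSelection (u : ℝ → ℝ → EReal) (F : ℝ → ℝ → ℝ) (cs : ℝ → ℝ → ℝ) : Prop :=
  (∀ p k : ℝ, 0 < p → 0 < k → 0 < cs p k) ∧
  ContinuousOn (fun q : ℝ × ℝ => cs q.1 q.2) posOrthOpen ∧
  ∀ p k : ℝ, 0 < p → 0 < k →
    ((F k (cs p k) * p : ℝ) : EReal) + u (cs p k) k = Ham u F k p

/-- The set `F(k, c*(∂V(k), k))`. -/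
def inclSet (F : ℝ → ℝ → ℝ) (cs : ℝ → ℝ → ℝ) (V : ℝ → ℝ) (k : ℝ) : Set ℝ :=
  {d : ℝ | ∃ p ∈ subdiffOn V (Set.Ioi 0) k, d = F k (cs p k)}

/-- `limsup_{n → ∞} n (k(t + 1/n) - k(t))`. -/
def forwardSlope (k : ℝ → ℝ) (t : ℝ) : ℝ :=
  Filter.limsup (fun n : ℕ => (n : ℝ) * (k (t + 1 / (n : ℝ)) - k t)) Filter.atTop

/-- The consumption path (13): `c(t)` is the element of `c*(∂V(k(t)), k(t))` closest to
`limsup_{n} n (k(t+1/n) - k(t))`. -/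
def IsClosestConsumption (F : ℝ → ℝ → ℝ) (cs : ℝ → ℝ → ℝ) (V : ℝ → ℝ)
    (k : ℝ → ℝ) (c : ℝ → ℝ) : Prop :=
  ∀ t : ℝ, 0 ≤ t →
    (∃ p ∈ subdiffOn V (Set.Ioi 0) (k t), c t = cs p (k t)) ∧
    ∀ p ∈ subdiffOn V (Set.Ioi 0) (k t),
      |forwardSlope k t - c t| ≤ |forwardSlope k t - cs p (k t)|

/-- Membership in the class `B_k̄`. -/
structure MemB (ρ : ℝ) (W : Set (ℝ → ℝ)) (u : ℝ → ℝ → EReal) (F : ℝ → ℝ → ℝ)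
    (kbar : ℝ) (k c : ℝ → ℝ) : Prop where
  locAC : LocAbsCont k
  mem_W : c ∈ W
  k_nonneg : ∀ t : ℝ, 0 ≤ t → 0 ≤ k t
  c_nonneg : ∀ t : ℝ, 0 ≤ t → 0 ≤ c t
  lim_exists : ∃ L : ℝ, Tendsto (fun T => payoffUpTo ρ u k c T) atTop (𝓝 ((L : ℝ) : EReal))
  init : k 0 = kbar
  ode : ∀ᵐ t : ℝ, 0 < t → HasDerivAt k (F (k t) (c t)) t

/- ## Quantities appearing in Lemma 4 -/

def khat (F : ℝ → ℝ → ℝ) (kstar cstar γ δ kbar : ℝ) : ℝ :=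
  kbar - kstar + (δ * cstar + F kstar cstar) / γ

def CstarConst (ρ θ γ δ kh : ℝ) : ℝ := (ρ - (1 - θ) * γ) / (θ * δ) * kh

def V3val (ρ θ γ Cs : ℝ) : ℝ :=
  if θ = 1 then Real.log Cs / ρ + (γ - ρ) / ρ ^ 2
  else Cs ^ (1 - θ) * θ / ((1 - θ) * (ρ - (1 - θ) * γ)) - 1 / (ρ * (1 - θ))

def V4val (ρ θ γ kh : ℝ) : ℝ :=
  if θ = 1 then Real.log kh / ρ + γ / ρ ^ 2
  else kh ^ (1 - θ) / ((1 - θ) * (ρ - (1 - θ) * γ)) - 1 / (ρ * (1 - θ))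

/- ## Carathéodory equations (Lemma 3) -/

/-- Carathéodory's condition for `h(t,x)` relative to the region `U`. -/
def Caratheodory (h : ℝ → ℝ → ℝ) (U : Set (ℝ × ℝ)) : Prop :=
  (∀ t : ℝ, ContinuousOn (fun x => h t x) {x : ℝ | (t, x) ∈ U}) ∧
  (∀ x : ℝ, Measurable (fun t => h t x))

/-- `h(t,x)` is Lipschitz in `x` on `U`. -/
def LipschitzInSnd (h : ℝ → ℝ → ℝ) (U : Set (ℝ × ℝ)) : Prop :=
  ∃ L > (0:ℝ), ∀ t x₁ x₂ : ℝ, (t, x₁) ∈ U → (t, x₂) ∈ U → |h t x₁ - h t x₂| ≤ L * |x₁ - x₂|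

/-- A solution on `[0,T]` of `k' = h(t,k)`, `k(0) = kbar`, with graph in `U`. -/
structure CaraSolOn (h : ℝ → ℝ → ℝ) (U : Set (ℝ × ℝ)) (kbar T : ℝ) (k : ℝ → ℝ) : Prop where
  ac : AbsContOn k 0 T
  init : k 0 = kbar
  graph : ∀ t ∈ Set.Icc (0:ℝ) T, (t, k t) ∈ U
  hasDeriv : ∀ᵐ t : ℝ, t ∈ Set.Icc (0:ℝ) T → HasDerivAt k (h t (k t)) t

/- ## The Ramsey–Cass–Koopmans specialization -/

def ur0 (u0 : ℝ → EReal) (c : ℝ) : ℝ := (u0 c).toReal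

/-- Assumption 2' on a one-variable utility function. -/
structure Assumption2' (u0 : ℝ → EReal) : Prop where
  ne_top : ∀ c : ℝ, u0 c ≠ ⊤
  cont : ContinuousOn u0 (Set.Ici 0)
  concave : ∀ c₁ c₂ t : ℝ, 0 ≤ c₁ → 0 ≤ c₂ → 0 ≤ t → t ≤ 1 →
    ((1 - t : ℝ) : EReal) * u0 c₁ + (t : EReal) * u0 c₂ ≤ u0 ((1 - t) * c₁ + t * c₂)
  strictMono : ∀ c₁ c₂ : ℝ, 0 ≤ c₁ → c₁ < c₂ → u0 c₁ < u0 c₂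
  ne_bot_pos : ∀ c : ℝ, 0 < c → u0 c ≠ ⊥
  smooth : ContDiffOn ℝ 1 (ur0 u0) (Set.Ioi 0)
  anti : ∀ c₁ c₂ : ℝ, 0 < c₁ → c₁ < c₂ → deriv (ur0 u0) c₂ < deriv (ur0 u0) c₁
  tendsto_zero : Tendsto (fun c => deriv (ur0 u0) c) (𝓝[>] (0:ℝ)) atTop
  tendsto_top : Tendsto (fun c => deriv (ur0 u0) c) atTop (𝓝 0)

/-- Assumption 3' on a production function `f` and the depreciation rate `d`. -/
structure Assumption3' (f : ℝ → ℝ) (d : ℝ) : Prop where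
  nonneg : ∀ k : ℝ, 0 ≤ k → 0 ≤ f k
  cont : ContinuousOn f (Set.Ici 0)
  concave : ConcaveOn ℝ (Set.Ici 0) f
  strictMono : StrictMonoOn f (Set.Ici 0)
  zero : f 0 = 0
  d_nonneg : 0 ≤ d
  productive : ∃ k > (0:ℝ), d * k < f k

/-- The Inada condition. -/
def InadaCondition (f : ℝ → ℝ) : Prop :=
  (∀ k : ℝ, 0 < k → DifferentiableAt ℝ f k) ∧ ContinuousOn (deriv f) (Set.Ioi 0) ∧
  StrictConcaveOn ℝ (Set.Ici 0) f ∧ deriv f '' Set.Ioi 0 = Set.Ioi 0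

/-- The utility function of the RCK model, as a function of `(c, k)`. -/
def rckU (u0 : ℝ → EReal) : ℝ → ℝ → EReal := fun c _ => u0 c

/-- The technology function of the RCK model. -/
def rckF (f : ℝ → ℝ) (d : ℝ) : ℝ → ℝ → ℝ := fun k c => f k - d * k - c


/-!
A `C¹` function touching the concave `V` from above or below at `k` has its derivative in
`∂V(k)`; this gives `⇐`, and testing with the affine majorants `V k + p (· - k)` gives
`ρ V(k) ≤ H(k, p)`. For the reverse inequality, the minimisers `xₙ` of
`V z - q (z - k) + n (z - k)²` converge to `k`, and at `xₙ` a parabola of slope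
`pₙ = q - 2n (xₙ - k)` touches `V` from below, so `H(xₙ, pₙ) ≤ ρ V(xₙ)` with `pₙ ∈ ∂V(xₙ)`.
By lower semicontinuity of `H`, every cluster point `p₀` of `(pₙ)` satisfies
`H(k, p₀) ≤ ρ V(k)`. Taking `q` above (below) the secant slopes around `k` forces `xₙ > k`
(`xₙ < k`), and monotonicity of `∂V` then puts `p₀` below (above) all of `∂V(k)`. As `H(k, ·)`
is convex, the inequality holds on all of `∂V(k)`.
-/

section Subdifferential

variable {V : ℝ → ℝ} {S : Set ℝ}

lemma subdiffOn_anti {x₁ x₂ p₁ p₂ : ℝ} (hx₁ : x₁ ∈ S) (hx₂ : x₂ ∈ S) (hlt : x₁ < x₂)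
    (hp₁ : p₁ ∈ subdiffOn V S x₁) (hp₂ : p₂ ∈ subdiffOn V S x₂) : p₂ ≤ p₁ := by
  nlinarith [hp₁ x₂ hx₂, hp₂ x₁ hx₁]

lemma le_div_of_mem_subdiffOn {a x p : ℝ} (hp : p ∈ subdiffOn V S x) (ha : a ∈ S)
    (hax : a < x) : p ≤ (V x - V a) / (x - a) := by
  rw [le_div_iff₀ (sub_pos.2 hax)]
  linarith [hp a ha]

lemma div_le_of_mem_subdiffOn {b x p : ℝ} (hp : p ∈ subdiffOn V S x) (hb : b ∈ S)
    (hxb : x < b) : (V b - V x) / (b - x) ≤ p := by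
  rw [div_le_iff₀ (sub_pos.2 hxb)]
  linarith [hp b hb]

variable {ι : Type*} {l : Filter ι} {x p : ι → ℝ} {k : ℝ}

lemma eventually_lt_of_mem_subdiffOn {a s : ℝ} (ha : a ∈ S) (hak : a < k)
    (hVk : ContinuousAt V k) (hx : Tendsto x l (𝓝 k))
    (hp : ∀ᶠ i in l, p i ∈ subdiffOn V S (x i)) (hs : (V k - V a) / (k - a) < s) :
    ∀ᶠ i in l, p i < s := by
  have hslope : Tendsto (fun i => (V (x i) - V a) / (x i - a)) l (𝓝 ((V k - V a) / (k - a))) :=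
    ((hVk.tendsto.comp hx).sub_const _).div (hx.sub_const _) (sub_pos.2 hak).ne'
  filter_upwards [hp, hx.eventually (lt_mem_nhds hak), hslope.eventually (gt_mem_nhds hs)]
    with i hpi hai hsi
  exact (le_div_of_mem_subdiffOn hpi ha hai).trans_lt hsi

lemma eventually_gt_of_mem_subdiffOn {b s : ℝ} (hb : b ∈ S) (hkb : k < b)
    (hVk : ContinuousAt V k) (hx : Tendsto x l (𝓝 k))
    (hp : ∀ᶠ i in l, p i ∈ subdiffOn V S (x i)) (hs : s < (V b - V k) / (b - k)) :
    ∀ᶠ i in l, s < p i := by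
  have hslope : Tendsto (fun i => (V b - V (x i)) / (b - x i)) l (𝓝 ((V b - V k) / (b - k))) :=
    ((hVk.tendsto.comp hx).const_sub _).div (hx.const_sub _) (sub_pos.2 hkb).ne'
  filter_upwards [hp, hx.eventually (gt_mem_nhds hkb), hslope.eventually (lt_mem_nhds hs)]
    with i hpi hib hsi
  exact hsi.trans_le (div_le_of_mem_subdiffOn hpi hb hib)

end Subdifferential

lemma le_of_hasDerivAt_of_eventually_mul_le {g : ℝ → ℝ} {a d : ℝ} (hg : HasDerivAt g d 0)
    (hg0 : g 0 = 0) (h : ∀ᶠ t in 𝓝[>] 0, t * a ≤ g t) : a ≤ d := by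
  refine ge_of_tendsto hg.tendsto_slope_zero_right ?_
  filter_upwards [h, self_mem_nhdsWithin] with t ht (htpos : 0 < t)
  rw [zero_add, hg0, sub_zero, smul_eq_mul, inv_mul_eq_div, le_div_iff₀ htpos]
  linarith

section Touching

variable {V φ : ℝ → ℝ} {S : Set ℝ} {k p : ℝ}

lemma ConcaveOn.mem_subdiffOn_of_le_of_hasDerivAt (hV : ConcaveOn ℝ S V) (hk : k ∈ S)
    (hφ : HasDerivAt φ p k) (heq : φ k = V k) (hle : ∀ᶠ z in 𝓝 k, V z ≤ φ z) :
    p ∈ subdiffOn V S k := by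
  intro y hy
  have hpath : HasDerivAt (fun t : ℝ => k + t * (y - k)) (y - k) 0 := by
    simpa using ((hasDerivAt_id (0:ℝ)).mul_const (y - k)).const_add k
  have hg : HasDerivAt (fun t => φ (k + t * (y - k)) - φ k) (p * (y - k)) 0 :=
    (hφ.comp_of_eq 0 hpath (by simp)).sub_const _
  refine le_of_hasDerivAt_of_eventually_mul_le hg (by simp) ?_
  have hpath_lim : Tendsto (fun t : ℝ => k + t * (y - k)) (𝓝[>] 0) (𝓝 k) := by
    simpa using hpath.continuousAt.tendsto.mono_left nhdsWithin_le_nhds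
  filter_upwards [hpath_lim.eventually hle, Ioo_mem_nhdsGT one_pos] with t hVφ ⟨ht0, ht1⟩
  have hconc := hV.2 hk hy (sub_nonneg.2 ht1.le) ht0.le (sub_add_cancel 1 t)
  rw [smul_eq_mul, smul_eq_mul, smul_eq_mul, smul_eq_mul,
    show (1 - t) * k + t * y = k + t * (y - k) by ring] at hconc
  linarith

lemma ConcaveOn.mem_subdiffOn_of_ge_of_hasDerivAt (hV : ConcaveOn ℝ S V) (hS : S ∈ 𝓝 k)
    (hφ : HasDerivAt φ p k) (heq : φ k = V k) (hle : ∀ᶠ z in 𝓝 k, φ z ≤ V z) :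
    p ∈ subdiffOn V S k := by
  intro y hy
  have hpath : HasDerivAt (fun t : ℝ => k - t * (y - k)) (-(y - k)) 0 := by
    simpa using ((hasDerivAt_id (0:ℝ)).mul_const (y - k)).const_sub k
  have hg : HasDerivAt (fun t => φ k - φ (k - t * (y - k))) (p * (y - k)) 0 :=
    ((hφ.comp_of_eq 0 hpath (by simp)).const_sub (φ k)).congr_deriv (by ring)
  refine le_of_hasDerivAt_of_eventually_mul_le hg (by simp) ?_
  have hpath_lim : Tendsto (fun t : ℝ => k - t * (y - k)) (𝓝[>] 0) (𝓝 k) := by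
    simpa using hpath.continuousAt.tendsto.mono_left nhdsWithin_le_nhds
  filter_upwards [hpath_lim.eventually (hle.and hS), self_mem_nhdsWithin]
    with t ⟨hφV, hz⟩ (ht : 0 < t)
  -- `k` is the convex combination of `k - t (y - k)` and `y` with weights `1 : t`.
  have hconc := hV.2 hz hy (by positivity : (0:ℝ) ≤ 1 / (1 + t))
    (by positivity : (0:ℝ) ≤ t / (1 + t)) (by field_simp)
  rw [smul_eq_mul, smul_eq_mul, smul_eq_mul, smul_eq_mul,
    show 1 / (1 + t) * (k - t * (y - k)) + t / (1 + t) * y = k by field_simp; ring] at hconc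
  have hmean : (V (k - t * (y - k)) + t * V y) / (1 + t) ≤ V k :=
    (le_of_eq (by ring)).trans hconc
  rw [div_le_iff₀ (by positivity)] at hmean
  linarith

end Touching

section Hamiltonian

variable {u : ℝ → ℝ → EReal} {F : ℝ → ℝ → ℝ}

lemma le_ham {k p c : ℝ} (hc : 0 ≤ c) : ((F k c * p : ℝ) : EReal) + u c k ≤ Ham u F k p :=
  le_iSup (fun c : {c : ℝ // 0 ≤ c} => ((F k c.1 * p : ℝ) : EReal) + u c.1 k) ⟨c, hc⟩

lemma ham_le_max_of_mem_Icc {k p₁ p p₂ : ℝ} (hp : p ∈ Icc p₁ p₂) :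
    Ham u F k p ≤ max (Ham u F k p₁) (Ham u F k p₂) := by
  refine iSup_le fun c => ?_
  rcases le_total 0 (F k c.1) with hF | hF
  · refine le_max_of_le_right ((add_le_add_left ?_ _).trans (le_ham c.2))
    exact EReal.coe_le_coe_iff.2 (mul_le_mul_of_nonneg_left hp.2 hF)
  · refine le_max_of_le_left ((add_le_add_left ?_ _).trans (le_ham c.2))
    exact EReal.coe_le_coe_iff.2 (mul_le_mul_of_nonpos_left hp.1 hF)

/-- The Hamiltonian is lower semicontinuous, being a supremum of continuous functions. -/
lemma ham_le_of_tendsto {ι : Type*} {l : Filter ι} [l.NeBot]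
    (hu : ContinuousOn (fun q : ℝ × ℝ => u q.1 q.2) posOrth)
    (hF : ContinuousOn (fun q : ℝ × ℝ => F q.1 q.2) posOrth)
    {x p r : ι → ℝ} {k p₀ r₀ : ℝ} (hk : 0 ≤ k) (hx₀ : ∀ᶠ i in l, 0 ≤ x i)
    (hx : Tendsto x l (𝓝 k)) (hp : Tendsto p l (𝓝 p₀)) (hr : Tendsto r l (𝓝 r₀))
    (hH : ∀ᶠ i in l, Ham u F (x i) (p i) ≤ r i) : Ham u F k p₀ ≤ r₀ := by
  refine iSup_le fun ⟨c, hc⟩ => ?_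
  have hFc : Tendsto (fun i => F (x i) c) l (𝓝 (F k c)) :=
    (hF.continuousWithinAt ⟨hk, hc⟩).tendsto.comp <| tendsto_nhdsWithin_iff.2
      ⟨hx.prodMk_nhds tendsto_const_nhds, hx₀.mono fun i hi => ⟨hi, hc⟩⟩
  have huc : Tendsto (fun i => u c (x i)) l (𝓝 (u c k)) :=
    (hu.continuousWithinAt ⟨hc, hk⟩).tendsto.comp <| tendsto_nhdsWithin_iff.2
      ⟨tendsto_const_nhds.prodMk_nhds hx, hx₀.mono fun i hi => ⟨hc, hi⟩⟩
  have hterm : Tendsto (fun i => ((F (x i) c * p i : ℝ) : EReal) + u c (x i)) l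
      (𝓝 (((F k c * p₀ : ℝ) : EReal) + u c k)) :=
    (EReal.continuousAt_add (.inl (EReal.coe_ne_top _)) (.inl (EReal.coe_ne_bot _))).tendsto.comp
      ((continuous_coe_real_ereal.tendsto _ |>.comp (hFc.mul hp)).prodMk_nhds huc)
  exact le_of_tendsto_of_tendsto hterm (continuous_coe_real_ereal.tendsto _ |>.comp hr)
    (hH.mono fun i hi => (le_ham hc).trans hi)

end Hamiltonian

lemma exists_tendsto_parabola_le {V : ℝ → ℝ} {k r : ℝ} (hr : 0 ≤ r)
    (hV : ContinuousOn V (Icc (k - r) (k + r))) (q : ℝ) :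
    ∃ x : ℕ → ℝ, Tendsto x atTop (𝓝 k) ∧ ∀ n : ℕ, x n ∈ Icc (k - r) (k + r) ∧
      ∀ z ∈ Icc (k - r) (k + r),
        V (x n) + (q - 2 * n * (x n - k)) * (z - x n) - n * (z - x n) ^ 2 ≤ V z := by
  have hk : k ∈ Icc (k - r) (k + r) := ⟨by linarith, by linarith⟩
  have hcont (n : ℕ) : ContinuousOn (fun z => V z - q * (z - k) + n * (z - k) ^ 2)
      (Icc (k - r) (k + r)) :=
    (hV.sub (by fun_prop)).add (by fun_prop)
  choose x hxI hxmin using fun n => isCompact_Icc.exists_isMinOn ⟨k, hk⟩ (hcont n)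
  have hmin (n : ℕ) {z : ℝ} (hz : z ∈ Icc (k - r) (k + r)) :
      V (x n) - q * (x n - k) + n * (x n - k) ^ 2 ≤ V z - q * (z - k) + n * (z - k) ^ 2 :=
    isMinOn_iff.1 (hxmin n) z hz
  obtain ⟨m, -, hm⟩ := isCompact_Icc.exists_isMinOn ⟨k, hk⟩ hV
  have hpen (n : ℕ) : (n : ℝ) * (x n - k) ^ 2 ≤ V k - V m + |q| * r := by
    have h₁ := hmin n hk
    have h₂ : V m ≤ V (x n) := hm (hxI n)
    have h₃ : q * (x n - k) ≤ |q| * r := (le_abs_self _).trans <| by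
      rw [abs_mul]
      exact mul_le_mul_of_nonneg_left (abs_sub_le_iff.2 ⟨by linarith [(hxI n).2],
        by linarith [(hxI n).1]⟩) (abs_nonneg q)
    nlinarith
  refine ⟨x, ?_, fun n => ⟨hxI n, fun z hz => ?_⟩⟩
  · have hsq : Tendsto (fun n => (x n - k) ^ 2) atTop (𝓝 0) := by
      refine squeeze_zero' (.of_forall fun n => sq_nonneg _) ?_
        (tendsto_const_div_atTop_nhds_zero_nat (V k - V m + |q| * r))
      filter_upwards [eventually_gt_atTop 0] with n hn
      rw [le_div_iff₀ (by exact_mod_cast hn), mul_comm]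
      exact hpen n
    have habs : Tendsto (fun n => |x n - k|) atTop (𝓝 0) := by
      simpa [Real.sqrt_sq_eq_abs] using hsq.sqrt
    exact tendsto_iff_norm_sub_tendsto_zero.2 habs
  · linear_combination hmin n hz

lemma hasDerivAt_parabola (a p c x : ℝ) :
    HasDerivAt (fun z => a + p * (z - x) - c * (z - x) ^ 2) p x := by
  have hlin := ((hasDerivAt_id x).sub_const x).const_mul p
  have hsq := (((hasDerivAt_id x).sub_const x).pow 2).const_mul c
  simpa using (hlin.const_add a).fun_sub hsq

section Viscosity

variable {ρ : ℝ} {u : ℝ → ℝ → EReal} {F : ℝ → ℝ → ℝ} {V : ℝ → ℝ}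

lemma IsViscositySupersolution.le_ham (hsup : IsViscositySupersolution ρ u F V) {k p : ℝ}
    (hk : 0 < k) (hp : p ∈ subdiffOn V (Ioi 0) k) : ((ρ * V k : ℝ) : EReal) ≤ Ham u F k p := by
  have hball : Metric.ball k k ⊆ Ioi 0 := fun z hz => by
    rw [Metric.mem_ball, Real.dist_eq] at hz
    exact mem_Ioi.2 (by linarith [abs_lt.1 hz])
  have hφ : HasDerivAt (fun z => V k + p * (z - k)) p k := by
    simpa using (((hasDerivAt_id k).sub_const k).const_mul p).const_add (V k)
  simpa [hφ.deriv] using hsup.2 k hk _ k hk hball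
    (by fun_prop : ContDiff ℝ 1 fun z => V k + p * (z - k)).contDiffOn
    (by simp) fun z hz => by linarith [hp z (hball hz)]

lemma IsViscositySubsolution.mem_subdiffOn_and_ham_le_of_parabola_le
    (hsub : IsViscositySubsolution ρ u F V) (hV : ConcaveOn ℝ (Ioi 0) V) {x p c δ : ℝ}
    (hδ : 0 < δ) (hball : Metric.ball x δ ⊆ Ioi 0)
    (hle : ∀ z ∈ Metric.ball x δ, V x + p * (z - x) - c * (z - x) ^ 2 ≤ V z) :
    p ∈ subdiffOn V (Ioi 0) x ∧ Ham u F x p ≤ ((ρ * V x : ℝ) : EReal) := by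
  have hx : 0 < x := hball (Metric.mem_ball_self hδ)
  have hφ := hasDerivAt_parabola (V x) p c x
  refine ⟨hV.mem_subdiffOn_of_ge_of_hasDerivAt (Ioi_mem_nhds hx) hφ (by simp)
    (eventually_of_mem (Metric.ball_mem_nhds x hδ) hle), ?_⟩
  simpa [hφ.deriv] using hsub.2 x hx _ δ hδ hball
    (by fun_prop : ContDiff ℝ 1 fun z => V x + p * (z - x) - c * (z - x) ^ 2).contDiffOn
    (by simp) hle

lemma IsViscositySubsolution.exists_seq_mem_subdiffOn_ham_le
    (hsub : IsViscositySubsolution ρ u F V) (hV : ConcaveOn ℝ (Ioi 0) V) {k : ℝ} (hk : 0 < k)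
    (q : ℝ) :
    ∃ x : ℕ → ℝ, Tendsto x atTop (𝓝 k) ∧ ∀ᶠ n : ℕ in atTop,
      q - 2 * n * (x n - k) ∈ subdiffOn V (Ioi 0) (x n) ∧
      Ham u F (x n) (q - 2 * n * (x n - k)) ≤ ((ρ * V (x n) : ℝ) : EReal) := by
  have hI : Icc (k - k / 2) (k + k / 2) ⊆ Ioi 0 := fun z hz => mem_Ioi.2 (by linarith [hz.1])
  obtain ⟨x, hx, hpar⟩ :=
    exists_tendsto_parabola_le (by positivity) ((hV.continuousOn isOpen_Ioi).mono hI) q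
  refine ⟨x, hx, ?_⟩
  filter_upwards [hx.eventually (Metric.ball_mem_nhds k (by positivity : 0 < k / 4))] with n hn
  have hball : Metric.ball (x n) (k / 4) ⊆ Icc (k - k / 2) (k + k / 2) := fun z hz => by
    rw [Metric.mem_ball] at hz
    rw [Real.dist_eq] at hz hn
    constructor <;> linarith [abs_lt.1 hz, abs_lt.1 hn]
  exact hsub.mem_subdiffOn_and_ham_le_of_parabola_le hV (by positivity) (hball.trans hI)
    fun z hz => (hpar n).2 z (hball hz)

lemma exists_ham_le_mapClusterPt {ι : Type*} {l : Filter ι} [l.NeBot]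
    (hu : ContinuousOn (fun q : ℝ × ℝ => u q.1 q.2) posOrth)
    (hF : ContinuousOn (fun q : ℝ × ℝ => F q.1 q.2) posOrth)
    (hV : ConcaveOn ℝ (Ioi 0) V) {x p : ι → ℝ} {k : ℝ} (hk : 0 < k) (hx : Tendsto x l (𝓝 k))
    (hev : ∀ᶠ i in l, p i ∈ subdiffOn V (Ioi 0) (x i) ∧
      Ham u F (x i) (p i) ≤ ((ρ * V (x i) : ℝ) : EReal)) :
    ∃ p₀, Ham u F k p₀ ≤ ((ρ * V k : ℝ) : EReal) ∧ MapClusterPt p₀ l p := by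
  have hVk : ContinuousAt V k := (hV.continuousOn isOpen_Ioi).continuousAt (Ioi_mem_nhds hk)
  have hmem := hev.mono fun _ h => h.1
  have hlo := eventually_gt_of_mem_subdiffOn (mem_Ioi.2 (by linarith : (0:ℝ) < 2 * k))
    (by linarith) hVk hx hmem (sub_one_lt _)
  have hhi := eventually_lt_of_mem_subdiffOn (mem_Ioi.2 (half_pos hk)) (half_lt_self hk) hVk hx
    hmem (lt_add_one _)
  obtain ⟨p₀, -, hclust⟩ := isCompact_Icc.exists_mapClusterPt_of_frequently
    ((hlo.and hhi).mono fun _ h => ⟨h.1.le, h.2.le⟩).frequently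
  set l' := l ⊓ comap p (𝓝 p₀)
  have : l'.NeBot := by
    rw [← map_neBot_iff p, Filter.push_pull, inf_comm]
    exact hclust
  have hx' : Tendsto x l' (𝓝 k) := hx.mono_left inf_le_left
  refine ⟨p₀, ham_le_of_tendsto hu hF hk.le (hx'.eventually (eventually_ge_nhds hk)) hx'
    (tendsto_comap.mono_left inf_le_right) ((hVk.tendsto.comp hx').const_mul ρ)
    ((hev.filter_mono inf_le_left).mono fun _ h => h.2), hclust⟩

lemma IsViscositySubsolution.exists_ham_le_forall_le (hsub : IsViscositySubsolution ρ u F V)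
    (hu : ContinuousOn (fun q : ℝ × ℝ => u q.1 q.2) posOrth)
    (hF : ContinuousOn (fun q : ℝ × ℝ => F q.1 q.2) posOrth)
    (hV : ConcaveOn ℝ (Ioi 0) V) {k : ℝ} (hk : 0 < k) :
    ∃ p₀, Ham u F k p₀ ≤ ((ρ * V k : ℝ) : EReal) ∧ ∀ p ∈ subdiffOn V (Ioi 0) k, p₀ ≤ p := by
  have hVk : ContinuousAt V k := (hV.continuousOn isOpen_Ioi).continuousAt (Ioi_mem_nhds hk)
  obtain ⟨x, hx, hev⟩ :=
    hsub.exists_seq_mem_subdiffOn_ham_le hV hk ((V k - V (k / 2)) / (k - k / 2) + 1)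
  obtain ⟨p₀, hH, hclust⟩ := exists_ham_le_mapClusterPt hu hF hV hk hx hev
  -- The penalised slopes `q - 2 n (x n - k)` eventually stay below `q`, the secant slope over
  -- `[k / 2, k]` plus one, which forces `x n > k`.
  have hlt := eventually_lt_of_mem_subdiffOn (mem_Ioi.2 (half_pos hk)) (half_lt_self hk) hVk hx
    (hev.mono fun _ h => h.1) (lt_add_one _)
  refine ⟨p₀, hH, fun p hp => isClosed_Iic.mem_of_mapClusterPt hclust ?_⟩
  filter_upwards [hev, hlt] with n hn hqn
  have hkx : k < x n := sub_pos.1 <| pos_of_mul_pos_right (by linarith) (Nat.cast_nonneg n)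
  exact subdiffOn_anti hk (hk.trans hkx) hkx hp hn.1

lemma IsViscositySubsolution.exists_ham_le_forall_ge (hsub : IsViscositySubsolution ρ u F V)
    (hu : ContinuousOn (fun q : ℝ × ℝ => u q.1 q.2) posOrth)
    (hF : ContinuousOn (fun q : ℝ × ℝ => F q.1 q.2) posOrth)
    (hV : ConcaveOn ℝ (Ioi 0) V) {k : ℝ} (hk : 0 < k) :
    ∃ p₀, Ham u F k p₀ ≤ ((ρ * V k : ℝ) : EReal) ∧ ∀ p ∈ subdiffOn V (Ioi 0) k, p ≤ p₀ := by
  have hVk : ContinuousAt V k := (hV.continuousOn isOpen_Ioi).continuousAt (Ioi_mem_nhds hk)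
  obtain ⟨x, hx, hev⟩ :=
    hsub.exists_seq_mem_subdiffOn_ham_le hV hk ((V (2 * k) - V k) / (2 * k - k) - 1)
  obtain ⟨p₀, hH, hclust⟩ := exists_ham_le_mapClusterPt hu hF hV hk hx hev
  have hgt := eventually_gt_of_mem_subdiffOn (mem_Ioi.2 (by linarith : (0:ℝ) < 2 * k))
    (by linarith) hVk hx (hev.mono fun _ h => h.1) (sub_one_lt _)
  refine ⟨p₀, hH, fun p hp => isClosed_Ici.mem_of_mapClusterPt hclust ?_⟩
  filter_upwards [hev, hgt, hx.eventually (lt_mem_nhds hk)] with n hn hqn hx₀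
  have hxk : x n < k := sub_neg.1 <| neg_of_mul_neg_right (by linarith) (Nat.cast_nonneg n)
  exact subdiffOn_anti hx₀ hk hxk hn.1 hp

lemma IsViscositySubsolution.ham_le (hsub : IsViscositySubsolution ρ u F V)
    (hu : ContinuousOn (fun q : ℝ × ℝ => u q.1 q.2) posOrth)
    (hF : ContinuousOn (fun q : ℝ × ℝ => F q.1 q.2) posOrth)
    (hV : ConcaveOn ℝ (Ioi 0) V) {k p : ℝ} (hk : 0 < k) (hp : p ∈ subdiffOn V (Ioi 0) k) :
    Ham u F k p ≤ ((ρ * V k : ℝ) : EReal) := by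
  obtain ⟨p₁, hH₁, hp₁⟩ := hsub.exists_ham_le_forall_le hu hF hV hk
  obtain ⟨p₂, hH₂, hp₂⟩ := hsub.exists_ham_le_forall_ge hu hF hV hk
  exact (ham_le_max_of_mem_Icc ⟨hp₁ p hp, hp₂ p hp⟩).trans (max_le hH₁ hH₂)

lemma isViscositySubsolution_of_forall_ham_le (hV : ConcaveOn ℝ (Ioi 0) V)
    (h : ∀ k, 0 < k → ∀ p ∈ subdiffOn V (Ioi 0) k, Ham u F k p ≤ ((ρ * V k : ℝ) : EReal)) :
    IsViscositySubsolution ρ u F V :=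
  ⟨(hV.continuousOn isOpen_Ioi).upperSemicontinuousOn, fun k hk _ _ hδ _ hφ heq hle =>
    h k hk _ <| hV.mem_subdiffOn_of_ge_of_hasDerivAt (Ioi_mem_nhds hk)
      ((hφ.differentiableOn one_ne_zero).differentiableAt (Metric.ball_mem_nhds k hδ)).hasDerivAt
      heq (eventually_of_mem (Metric.ball_mem_nhds k hδ) hle)⟩

lemma isViscositySupersolution_of_forall_le_ham (hV : ConcaveOn ℝ (Ioi 0) V)
    (h : ∀ k, 0 < k → ∀ p ∈ subdiffOn V (Ioi 0) k, ((ρ * V k : ℝ) : EReal) ≤ Ham u F k p) :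
    IsViscositySupersolution ρ u F V :=
  ⟨(hV.continuousOn isOpen_Ioi).lowerSemicontinuousOn, fun k hk _ _ hδ _ hφ heq hle =>
    h k hk _ <| hV.mem_subdiffOn_of_le_of_hasDerivAt hk
      ((hφ.differentiableOn one_ne_zero).differentiableAt (Metric.ball_mem_nhds k hδ)).hasDerivAt
      heq (eventually_of_mem (Metric.ball_mem_nhds k hδ) hle)⟩

end Viscosity

theorem viscosity_iff_subdifferential_general (ρ : ℝ) (W : Set (ℝ → ℝ)) (u : ℝ → ℝ → EReal)
    (F : ℝ → ℝ → ℝ)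
    (hA2 : Assumption2 u) (hA3 : Assumption3 W F)
    (V : ℝ → ℝ) (hV : ConcaveOn ℝ (Set.Ioi 0) V) :
    IsViscositySolution ρ u F V ↔
      ∀ k : ℝ, 0 < k → ∀ p ∈ subdiffOn V (Set.Ioi 0) k,
        Ham u F k p = ((ρ * V k : ℝ) : EReal) := by
  constructor
  · rintro ⟨-, hsub, hsup⟩ k hk p hp
    exact le_antisymm (hsub.ham_le hA2.cont hA3.cont hV hk hp) (hsup.le_ham hk hp)
  · intro h
    exact ⟨hV.continuousOn isOpen_Ioi,
      isViscositySubsolution_of_forall_ham_le hV fun k hk p hp => (h k hk p hp).le,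
      isViscositySupersolution_of_forall_le_ham hV fun k hk p hp => (h k hk p hp).ge⟩

/-- **Lemma 7.** A concave `V` is a viscosity solution to the HJB equation iff the HJB equation
holds at every subgradient. -/
theorem viscosity_iff_subdifferential (ρ : ℝ) (W : Set (ℝ → ℝ)) (u : ℝ → ℝ → EReal)
    (F : ℝ → ℝ → ℝ)
    (hA1 : Assumption1 ρ W) (hA2 : Assumption2 u) (hA3 : Assumption3 W F)
    (hA4 : Assumption4 u) (V : ℝ → ℝ) (hV : ConcaveOn ℝ (Set.Ioi 0) V) :
    IsViscositySolution ρ u F V ↔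
      ∀ k : ℝ, 0 < k → ∀ p ∈ subdiffOn V (Set.Ioi 0) k,
        Ham u F k p = ((ρ * V k : ℝ) : EReal) :=
  viscosity_iff_subdifferential_general ρ W u F hA2 hA3 V hV

end
end

section
/- Let U ⊆ ℝ be an open interval, H : U → ℝ concave, A < B, and x : [A,B] → U absolutely continuous, and set ψ(t) = H(x(t)). Then ψ is absolutely continuous on [A,B]. Moreover, if at some t both ψ̇(t) and ẋ(t) exist, then for every p ∈ ∂H(x(t)) one has ψ̇(t) = p·ẋ(t). -/
open MeasureTheory Real Set Filter Topology
open scoped ENNReal NNReal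

noncomputable section

/-!
A concave function on an open set is locally Lipschitz, hence Lipschitz on the compact image
`x '' [A, B]`, and composing an absolutely continuous function with a Lipschitz one keeps it
absolutely continuous. For the derivative: if `p` is a supergradient of `H` at `x t`, then
`s ↦ H (x s) - p * x s` has a local maximum at `t`, so its derivative `dψ - p * dx` vanishes.
-/

namespace AbsContOn

variable {f : ℝ → ℝ} {a b : ℝ}

theorem uniformContinuousOn (hf : AbsContOn f a b) : UniformContinuousOn f (Icc a b) := by
  rw [Metric.uniformContinuousOn_iff_le]
  intro ε hε
  obtain ⟨δ, hδ, hf⟩ := hf ε hε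
  refine ⟨δ / 2, half_pos hδ, fun s hs t ht hst => ?_⟩
  have key : ∀ u ∈ Icc a b, ∀ v ∈ Icc a b, u ≤ v → dist u v ≤ δ / 2 → dist (f u) (f v) ≤ ε := by
    intro u hu v hv huv hdist
    have := hf 1 (fun _ => u) (fun _ => v) (fun _ => ⟨hu.1, huv, hv.2⟩)
      (fun i j hij => absurd (Subsingleton.elim i j) hij)
      (by rw [Real.dist_eq, abs_sub_comm, abs_of_nonneg (sub_nonneg.2 huv)] at hdist
          simp only [Finset.univ_unique, Finset.sum_singleton]; linarith)
    rw [Real.dist_eq, abs_sub_comm]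
    simpa using this.le
  rcases le_total s t with h | h
  · exact key s hs t ht h hst
  · rw [dist_comm] at hst ⊢
    exact key t ht s hs h hst

theorem comp_lipschitzOnWith {g : ℝ → ℝ} {K : ℝ≥0} (hg : LipschitzOnWith K g (f '' Icc a b))
    (hf : AbsContOn f a b) : AbsContOn (fun t => g (f t)) a b := by
  intro ε hε
  obtain ⟨δ, hδ, hf⟩ := hf (ε / (K + 1)) (by positivity)
  refine ⟨δ, hδ, fun n s t hst hdisj hsum => ?_⟩
  have hg' : ∀ i, |g (f (t i)) - g (f (s i))| ≤ (K + 1) * |f (t i) - f (s i)| := fun i => by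
    have hs : s i ∈ Icc a b := ⟨(hst i).1, (hst i).2.1.trans (hst i).2.2⟩
    have ht : t i ∈ Icc a b := ⟨(hst i).1.trans (hst i).2.1, (hst i).2.2⟩
    have := hg.dist_le_mul _ (mem_image_of_mem f ht) _ (mem_image_of_mem f hs)
    rw [Real.dist_eq, Real.dist_eq] at this
    exact this.trans (mul_le_mul_of_nonneg_right (le_add_of_nonneg_right zero_le_one) (abs_nonneg _))
  calc ∑ i, |g (f (t i)) - g (f (s i))|
      ≤ ∑ i, (K + 1) * |f (t i) - f (s i)| := Finset.sum_le_sum fun i _ => hg' i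
    _ = (K + 1) * ∑ i, |f (t i) - f (s i)| := (Finset.mul_sum ..).symm
    _ < (K + 1) * (ε / (K + 1)) := by gcongr; exact hf n s t hst hdisj hsum
    _ = ε := by field_simp

end AbsContOn

theorem eq_mul_of_mem_subdiffOn {H x : ℝ → ℝ} {U : Set ℝ} {t dψ dx p : ℝ} (hU : U ∈ 𝓝 (x t))
    (hψ : HasDerivAt (fun s => H (x s)) dψ t) (hx : HasDerivAt x dx t)
    (hp : p ∈ subdiffOn H U (x t)) : dψ = p * dx := by
  have hmax : IsLocalMax (fun s => H (x s) - p * x s) t := by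
    filter_upwards [hx.continuousAt.preimage_mem_nhds hU] with s hs
    linarith [hp (x s) hs]
  linarith [hmax.hasDerivAt_eq_zero (hψ.sub (hx.const_mul p))]

theorem concave_comp_absolutely_continuous_general (U : Set ℝ) (hUopen : IsOpen U)
    (H : ℝ → ℝ) (hH : ConcaveOn ℝ U H)
    (A B : ℝ) (x : ℝ → ℝ) (hmaps : ∀ t ∈ Set.Icc A B, x t ∈ U)
    (hx : AbsContOn x A B) :
    AbsContOn (fun t => H (x t)) A B ∧
    ∀ t ∈ Set.Icc A B, ∀ dψ dx : ℝ,
      HasDerivAt (fun s => H (x s)) dψ t → HasDerivAt x dx t →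
      ∀ p ∈ subdiffOn H U (x t), dψ = p * dx := by
  have himage : x '' Icc A B ⊆ U := image_subset_iff.2 hmaps
  obtain ⟨K, hK⟩ := ((hH.locallyLipschitzOn hUopen).mono himage).exists_lipschitzOnWith_of_compact
    (isCompact_Icc.image_of_continuousOn hx.uniformContinuousOn.continuousOn)
  exact ⟨hx.comp_lipschitzOnWith hK, fun t ht _ _ hψ hxt _ hp =>
    eq_mul_of_mem_subdiffOn (hUopen.mem_nhds (hmaps t ht)) hψ hxt hp⟩

/-- **Lemma 8.** The composition of a concave function with an absolutely continuous function is
absolutely continuous, and its derivative is given by the chain rule through any subgradient. -/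
theorem concave_comp_absolutely_continuous (U : Set ℝ) (hUopen : IsOpen U)
    (hUconv : Convex ℝ U) (H : ℝ → ℝ) (hH : ConcaveOn ℝ U H)
    (A B : ℝ) (hAB : A < B) (x : ℝ → ℝ) (hmaps : ∀ t ∈ Set.Icc A B, x t ∈ U)
    (hx : AbsContOn x A B) :
    AbsContOn (fun t => H (x t)) A B ∧
    ∀ t ∈ Set.Icc A B, ∀ dψ dx : ℝ,
      HasDerivAt (fun s => H (x s)) dψ t → HasDerivAt x dx t →
      ∀ p ∈ subdiffOn H U (x t), dψ = p * dx :=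
  concave_comp_absolutely_continuous_general U hUopen H hH A B x hmaps hx

end
end
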